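/- arXiv:1507.06357 — 3 statements merged into one kernel-verified Lean document; each statement's English description precedes it below -/
import Mathlib

section
/- Global convergence of the exact-gain controller for a monotone concave time-invariant plant: let g : ℝ → ℝ be differentiable with g'(u) > 0 for all u and concave on ℝ, let r ∈ ℝ be such that g(û) = r for some û ∈ ℝ, and define u_n = u_{n−1} + (r − g(u_{n−1}))/g'(u_{n−1}) and e_n = r − g(u_n). Then for every starting point u₀ ∈ ℝ, u_n → û and e_n → 0 as n → ∞. -/
open Filter

private lemma tangent_above (g : ℝ → ℝ) (hg : Differentiable ℝ g)
    (hconv : ConcaveOn ℝ Set.univ g) (x y : ℝ) :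
    g y ≤ g x + deriv g x * (y - x) := by
  rcases lt_trichotomy x y with h | h | h
  · have := hconv.slope_le_deriv (Set.mem_univ x) (Set.mem_univ y) h (hg x)
    rw [slope_def_field, div_le_iff₀ (by linarith)] at this
    linarith
  · simp [h]
  · have := hconv.deriv_le_slope (Set.mem_univ y) (Set.mem_univ x) h (hg x)
    rw [slope_def_field, le_div_iff₀ (by linarith)] at this
    linarith

/-- Global convergence of the exact-gain integral controller (Newton–Raphson
iteration) for a time-invariant, monotone increasing, concave plant: from every
starting point the inputs converge to the solution `uhat` of `g u = r` and the
tracking errors `e n = r - g (u n)` converge to `0`. -/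
theorem newton_controller_global_convergence_concave
    (g : ℝ → ℝ) (hg : Differentiable ℝ g)
    (hg' : ∀ x : ℝ, 0 < deriv g x)
    (hconv : ConcaveOn ℝ Set.univ g)
    (r uhat : ℝ) (hroot : g uhat = r)
    (u : ℕ → ℝ)
    (hu : ∀ n : ℕ, u (n + 1) = u n + (r - g (u n)) / deriv g (u n)) :
    Tendsto u atTop (nhds uhat) ∧
      Tendsto (fun n => r - g (u n)) atTop (nhds 0) := by
  have hmono : StrictMono g := strictMono_of_deriv_pos hg'
  have hanti : AntitoneOn (deriv g) Set.univ :=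
    hconv.antitoneOn_deriv (fun x _ => hg x)
  -- after one step, g(u n) ≤ r
  have key : ∀ n : ℕ, g (u (n + 1)) ≤ r := by
    intro n
    have h := tangent_above g hg hconv (u n) (u (n + 1))
    rw [hu n] at h ⊢
    have hne : deriv g (u n) ≠ 0 := (hg' (u n)).ne'
    calc g (u n + (r - g (u n)) / deriv g (u n))
        ≤ g (u n) + deriv g (u n) * (u n + (r - g (u n)) / deriv g (u n) - u n) := h
      _ = r := by field_simp; ring
  set v : ℕ → ℝ := fun n => u (n + 1) with hv
  have hvstep : ∀ n, v (n + 1) = v n + (r - g (v n)) / deriv g (v n) := fun n => hu (n + 1)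
  have hvle : ∀ n, g (v n) ≤ r := fun n => key n
  have hvmono : Monotone v := by
    refine monotone_nat_of_le_succ fun n => ?_
    rw [hvstep n]
    have : 0 ≤ (r - g (v n)) / deriv g (v n) :=
      div_nonneg (by linarith [hvle n]) (hg' (v n)).le
    linarith
  have hvbdd : ∀ n, v n ≤ uhat := by
    intro n
    have : g (v n) ≤ g uhat := by rw [hroot]; exact hvle n
    exact (hmono.le_iff_le).mp this
  have hbdd : BddAbove (Set.range v) := ⟨uhat, by rintro _ ⟨n, rfl⟩; exact hvbdd n⟩
  set L : ℝ := ⨆ n, v n with hL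
  have hvlim : Tendsto v atTop (nhds L) := tendsto_atTop_ciSup hvmono hbdd
  have hvlim' : Tendsto (fun n => v (n + 1)) atTop (nhds L) :=
    hvlim.comp (tendsto_add_atTop_nat 1)
  have hdiff : Tendsto (fun n => v (n + 1) - v n) atTop (nhds 0) := by
    simpa using hvlim'.sub hvlim
  -- squeeze: r - g (v n) → 0
  have herr : Tendsto (fun n => r - g (v n)) atTop (nhds 0) := by
    have hle0 : ∀ n, v 0 ≤ v n := fun n => hvmono (Nat.zero_le n)
    have hub : ∀ n, r - g (v n) ≤ deriv g (v 0) * (v (n + 1) - v n) := by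
      intro n
      have h1 : r - g (v n) = deriv g (v n) * (v (n + 1) - v n) := by
        rw [hvstep n]
        rw [add_sub_cancel_left, mul_div_cancel₀ _ (hg' (v n)).ne']
      have h2 : deriv g (v n) ≤ deriv g (v 0) :=
        hanti (Set.mem_univ _) (Set.mem_univ _) (hle0 n)
      have h3 : 0 ≤ v (n + 1) - v n := by linarith [hvmono (Nat.le_succ n)]
      rw [h1]
      exact mul_le_mul_of_nonneg_right h2 h3
    have hlb : ∀ n, (0 : ℝ) ≤ r - g (v n) := fun n => by linarith [hvle n]
    have hup : Tendsto (fun n => deriv g (v 0) * (v (n + 1) - v n)) atTop (nhds 0) := by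
      simpa using hdiff.const_mul (deriv g (v 0))
    exact squeeze_zero hlb hub hup
  -- g L = r, hence L = uhat
  have hgL : Tendsto (fun n => g (v n)) atTop (nhds (g L)) :=
    (hg.continuous.tendsto L).comp hvlim
  have hgLr : g L = r := by
    have h1 : Tendsto (fun n => g (v n)) atTop (nhds r) := by
      have := herr.const_sub r
      simpa using this
    exact tendsto_nhds_unique hgL h1
  have hLu : L = uhat := hmono.injective (by rw [hgLr, hroot])
  have hulim : Tendsto u atTop (nhds uhat) := by
    rw [← hLu]
    exact (tendsto_add_atTop_iff_nat 1).mp hvlim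
  refine ⟨hulim, ?_⟩
  have : Tendsto (fun n => g (u n)) atTop (nhds (g uhat)) :=
    (hg.continuous.tendsto uhat).comp hulim
  have h2 := this.const_sub r
  rw [hroot] at h2
  simpa using h2
end

section
/- Bounded asymptotic error for slowly time-varying plants: let (g_n)_{n≥1} be a sequence of functions g_n : ℝ → ℝ, each differentiable and convex on ℝ, and suppose there are constants 0 < c ≤ C with c ≤ g_n'(u) ≤ C for all u ∈ ℝ and all n. Fix r ∈ ℝ and u₀ ∈ ℝ, and define e_n = r − g_n(u_{n−1}) and u_n = u_{n−1} + e_n / g_n'(u_{n−1}) for n ≥ 1. Then for every ε > 0 there exists δ > 0 such that: if |g_{n+1}(u_n) − g_n(u_n)| < δ for all n ≥ 1, then limsup_{n→∞} |e_n| < ε. -/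
/-!
The controller step is a Newton step for the equation `gₙ₊₁(u) = r`. By convexity a Newton step
overshoots, `gₙ₊₁(uₙ₊₁) ≥ r`, so after the plant changes the error is `eₙ₊₂ < δ`. By the mean
value theorem, a step from a negative error shrinks the residual by the factor `q = 1 - c/C`,
and a step from an error in `(0, δ]` lands within `(C/c - 1) δ` of `r`. Hence
`|eₙ₊₃| ≤ q |eₙ₊₂| + (C/c) δ`, and the limsup of the errors is at most `(C/c)² δ`.
-/

open Filter Set

theorem ConvexOn.add_deriv_mul_sub_le {S : Set ℝ} {f : ℝ → ℝ} {x y : ℝ}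
    (hconv : ConvexOn ℝ S f) (hx : x ∈ S) (hy : y ∈ S) (hf : DifferentiableAt ℝ f x) :
    f x + deriv f x * (y - x) ≤ f y := by
  rcases lt_trichotomy x y with hxy | rfl | hxy
  · have h := hconv.deriv_le_slope hx hy hxy hf
    rw [slope_def_field, le_div_iff₀ (sub_pos.2 hxy)] at h
    linarith
  · simp
  · have h := hconv.slope_le_deriv hy hx hxy hf
    rw [slope_def_field, div_le_iff₀ (sub_pos.2 hxy)] at h
    linarith

theorem eventually_le_of_le_mul_add {a : ℕ → ℝ} {q b η : ℝ} (hq0 : 0 ≤ q) (hq1 : q < 1)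
    (h : ∀ n, a (n + 1) ≤ q * a n + b) (hη : b / (1 - q) < η) :
    ∀ᶠ n in atTop, a n ≤ η := by
  set B := b / (1 - q) with hB
  have hbB : b = (1 - q) * B := by rw [hB]; field_simp [(sub_pos.2 hq1).ne']
  have hgeom (n : ℕ) : a n - B ≤ q ^ n * (a 0 - B) :=
    le_geom (u := fun n => a n - B) hq0 n fun k _ => by linarith [h k]
  have hlim : Tendsto (fun n => q ^ n * (a 0 - B)) atTop (nhds 0) := by
    simpa using (tendsto_pow_atTop_nhds_zero_of_lt_one hq0 hq1).mul_const (a 0 - B)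
  filter_upwards [hlim.eventually (ge_mem_nhds (sub_pos.2 hη))] with n hn
  linarith [hgeom n]

noncomputable def newtonStep (f : ℝ → ℝ) (r u : ℝ) : ℝ := u + (r - f u) / deriv f u

section NewtonStep

variable {f : ℝ → ℝ} {c C r u : ℝ}

theorem le_apply_newtonStep (hconv : ConvexOn ℝ univ f) (hf : DifferentiableAt ℝ f u)
    (hd : deriv f u ≠ 0) : r ≤ f (newtonStep f r u) := by
  have h := hconv.add_deriv_mul_sub_le (mem_univ u) (mem_univ (newtonStep f r u)) hf
  rwa [newtonStep, add_sub_cancel_left, mul_div_cancel₀ _ hd, add_sub_cancel] at h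

theorem sub_apply_newtonStep_lt {f₂ : ℝ → ℝ} {δ : ℝ} (hconv : ConvexOn ℝ univ f)
    (hf : DifferentiableAt ℝ f u) (hd : deriv f u ≠ 0)
    (hvar : |f₂ (newtonStep f r u) - f (newtonStep f r u)| < δ) :
    r - f₂ (newtonStep f r u) < δ := by
  linarith [le_apply_newtonStep (r := r) hconv hf hd, (abs_lt.1 hvar).1]

variable (hf : Differentiable ℝ f) (hbound : ∀ x, deriv f x ∈ Icc c C) (hc : 0 < c)
include hf hbound hc

theorem apply_newtonStep_sub_le_of_le (he : r ≤ f u) :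
    f (newtonStep f r u) - r ≤ (1 - c / C) * (f u - r) := by
  obtain ⟨hcd, hdC⟩ := hbound u
  have hd : 0 < deriv f u := hc.trans_le hcd
  have hstep : u - newtonStep f r u = (f u - r) / deriv f u := by rw [newtonStep]; ring
  have hle : newtonStep f r u ≤ u := by
    have := div_nonneg (sub_nonneg.2 he) hd.le
    linarith
  have hmvt := mul_sub_le_image_sub_of_le_deriv hf (fun x => (hbound x).1) hle
  have hslow : c * ((f u - r) / C) ≤ c * ((f u - r) / deriv f u) := by
    have := sub_nonneg.2 he
    gcongr
  rw [hstep] at hmvt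
  calc f (newtonStep f r u) - r ≤ f u - r - c * ((f u - r) / C) := by linarith
    _ = (1 - c / C) * (f u - r) := by ring

theorem apply_newtonStep_sub_le_of_ge (he : f u ≤ r) :
    f (newtonStep f r u) - r ≤ (C / c - 1) * (r - f u) := by
  obtain ⟨hcd, hdC⟩ := hbound u
  have hd : 0 < deriv f u := hc.trans_le hcd
  have hstep : newtonStep f r u - u = (r - f u) / deriv f u := by rw [newtonStep]; ring
  have hle : u ≤ newtonStep f r u := by
    have := div_nonneg (sub_nonneg.2 he) hd.le
    linarith
  have hmvt := image_sub_le_mul_sub_of_deriv_le hf (fun x => (hbound x).2) hle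
  have hfast : C * ((r - f u) / deriv f u) ≤ C * ((r - f u) / c) := by
    have := sub_nonneg.2 he
    have := hc.le.trans (hcd.trans hdC)
    gcongr
  rw [hstep] at hmvt
  calc f (newtonStep f r u) - r ≤ C * ((r - f u) / c) - (r - f u) := by linarith
    _ = (C / c - 1) * (r - f u) := by ring

theorem abs_sub_apply_newtonStep_le {f₂ : ℝ → ℝ} {δ : ℝ} (hcC : c ≤ C)
    (hconv : ConvexOn ℝ univ f) (hvar : |f₂ (newtonStep f r u) - f (newtonStep f r u)| < δ)
    (he : r - f u ≤ δ) :
    |r - f₂ (newtonStep f r u)| ≤ (1 - c / C) * |r - f u| + C / c * δ := by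
  have hδ : 0 ≤ δ := (abs_nonneg _).trans hvar.le
  have hq : 0 ≤ 1 - c / C := sub_nonneg.2 (div_le_one_of_le₀ hcC (hc.trans_le hcC).le)
  have hκ : 0 ≤ C / c - 1 := sub_nonneg.2 ((one_le_div hc).2 hcC)
  have hover := le_apply_newtonStep (r := r) hconv (hf u) (hc.trans_le (hbound u).1).ne'
  have hres : f (newtonStep f r u) - r ≤ (1 - c / C) * |r - f u| + (C / c - 1) * δ := by
    have := mul_nonneg hq (abs_nonneg (r - f u))
    rcases le_total (f u) r with h | h
    · have := apply_newtonStep_sub_le_of_ge hf hbound hc h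
      nlinarith
    · have := apply_newtonStep_sub_le_of_le hf hbound hc h
      rw [abs_of_nonpos (sub_nonpos.2 h)]
      nlinarith
  rw [abs_le]
  constructor <;> nlinarith [abs_lt.1 hvar]

end NewtonStep

/-- Bounded asymptotic tracking error of the adjustable-gain integral controller
for slowly time-varying plants: the plant functions `g n` (for `n ≥ 1`) are
differentiable and convex with derivatives uniformly bounded in `[c, C]`,
`0 < c ≤ C`; the errors are `e (n+1) = r - g (n+1) (u n)` and the inputs evolve
as `u (n+1) = u n + e (n+1) / (g (n+1))' (u n)`.  For every `ε > 0` there is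
`δ > 0` such that if the step-to-step plant variability along the trajectory is
below `δ`, then `limsup |e n| < ε`. -/
theorem time_varying_controller_bounded_asymptotic_error
    (g : ℕ → ℝ → ℝ)
    (hg : ∀ n : ℕ, 1 ≤ n → Differentiable ℝ (g n))
    (hconv : ∀ n : ℕ, 1 ≤ n → ConvexOn ℝ Set.univ (g n))
    (c C : ℝ) (hc : 0 < c) (hcC : c ≤ C)
    (hbound : ∀ n : ℕ, 1 ≤ n → ∀ x : ℝ, c ≤ deriv (g n) x ∧ deriv (g n) x ≤ C)
    (r : ℝ) (u e : ℕ → ℝ)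
    (he : ∀ n : ℕ, e (n + 1) = r - g (n + 1) (u n))
    (hu : ∀ n : ℕ, u (n + 1) = u n + e (n + 1) / deriv (g (n + 1)) (u n)) :
    ∀ ε > (0 : ℝ), ∃ δ > (0 : ℝ),
      (∀ n : ℕ, 1 ≤ n → |g (n + 1) (u n) - g n (u n)| < δ) →
        Filter.limsup (fun n => ((|e n| : ℝ) : EReal)) atTop < (ε : EReal) := by
  intro ε hε
  have hC : 0 < C := hc.trans_le hcC
  refine ⟨(c / C) ^ 2 * (ε / 4), by positivity, fun hvar => ?_⟩
  set δ := (c / C) ^ 2 * (ε / 4)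
  have hstep (n : ℕ) : u (n + 1) = newtonStep (g (n + 1)) r (u n) := by rw [hu, he]; rfl
  have hlt (n : ℕ) : e (n + 2) < δ := by
    have := hvar (n + 1) (by omega)
    rw [hstep n] at this
    rw [he, hstep n]
    exact sub_apply_newtonStep_lt (hconv _ (by omega)) (hg _ (by omega) _)
      (hc.trans_le (hbound _ (by omega) _).1).ne' this
  have hrec (n : ℕ) : |e (n + 3)| ≤ (1 - c / C) * |e (n + 2)| + C / c * δ := by
    have := hvar (n + 2) (by omega)
    rw [hstep (n + 1)] at this
    rw [he (n + 2), he (n + 1), hstep (n + 1)]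
    exact abs_sub_apply_newtonStep_le (hg _ (by omega)) (hbound _ (by omega)) hc hcC
      (hconv _ (by omega)) this (he (n + 1) ▸ (hlt n).le)
  have hlevel : C / c * δ / (1 - (1 - c / C)) = ε / 4 := by
    simp only [δ, sub_sub_cancel]
    field_simp
  have hev := eventually_le_of_le_mul_add (a := fun n => |e (n + 2)|) (η := ε / 2)
    (sub_nonneg.2 (div_le_one_of_le₀ hcC hC.le)) (by simp [hc, hC]) hrec (by linarith)
  rw [← limsup_nat_add _ 2]
  calc limsup (fun n => ((|e (n + 2)| : ℝ) : EReal)) atTop ≤ ((ε / 2 : ℝ) : EReal) :=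
        limsup_le_of_le (by isBoundedDefault) (hev.mono fun n hn => EReal.coe_le_coe_iff.2 hn)
    _ < ε := EReal.coe_lt_coe_iff.2 (by linarith)
end

section
/- Geometric error decay above a threshold for slowly time-varying plants: let (g_n)_{n≥1} be functions g_n : ℝ → ℝ, each differentiable and convex on ℝ, with constants 0 < c ≤ C such that c ≤ g_n'(u) ≤ C for all u and n. Fix r ∈ ℝ, u₀ ∈ ℝ, δ > 0, and define e_n = r − g_n(u_{n−1}) and u_n = u_{n−1} + e_n / g_n'(u_{n−1}). If |g_{n+1}(u_n) − g_n(u_n)| ≤ δ for all n ≥ 1, then there exist γ ∈ (0,1), η > 0, and N ≥ 0 such that for every n ≥ N with |e_{n−1}| > η, one has |e_n| ≤ γ |e_{n−1}|. -/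
open Filter

/-- Tangent line inequality for convex differentiable functions. -/
lemma tangent_le_aux (f : ℝ → ℝ) (hf : Differentiable ℝ f)
    (hc : ConvexOn ℝ Set.univ f) (x y : ℝ) :
    f x + deriv f x * (y - x) ≤ f y := by
  rcases lt_trichotomy x y with h | h | h
  · have := hc.deriv_le_slope (Set.mem_univ x) (Set.mem_univ y) h (hf x)
    rw [slope_def_field] at this
    have hxy : (0:ℝ) < y - x := by linarith
    rw [le_div_iff₀ hxy] at this
    nlinarith
  · simp [h]
  · have := hc.slope_le_deriv (Set.mem_univ y) (Set.mem_univ x) h (hf x)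
    rw [slope_def_field] at this
    have hxy : (0:ℝ) < x - y := by linarith
    rw [div_le_iff₀ hxy] at this
    nlinarith

/-- Mean value lower bound from a derivative lower bound. -/
lemma mvt_lower_aux (f : ℝ → ℝ) (hf : Differentiable ℝ f) (c : ℝ)
    (hd : ∀ z : ℝ, c ≤ deriv f z) (x y : ℝ) (h : y ≤ x) :
    c * (x - y) ≤ f x - f y := by
  rcases eq_or_lt_of_le h with h' | h'
  · simp [h']
  · obtain ⟨ξ, _, hξ⟩ := exists_hasDerivAt_eq_slope f (deriv f) h'
      (hf.continuous.continuousOn) (fun z _ => (hf z).hasDerivAt)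
    have hc' := hd ξ
    rw [hξ] at hc'
    have hxy : (0:ℝ) < x - y := by linarith
    rw [le_div_iff₀ hxy] at hc'
    linarith

/-- Geometric decay of the tracking error above a threshold for slowly
time-varying plants: the plant functions `g n` (for `n ≥ 1`) are differentiable
and convex with derivatives uniformly bounded in `[c, C]`, `0 < c ≤ C`; the
errors are `e (n+1) = r - g (n+1) (u n)` and the inputs evolve as
`u (n+1) = u n + e (n+1) / (g (n+1))' (u n)`.  If the step-to-step plant
variability along the trajectory is bounded by `δ`, then there exist
`γ ∈ (0,1)`, `η > 0` and `N` such that whenever `n ≥ N` and the current error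
exceeds `η` in absolute value, the error contracts by the factor `γ`. -/
theorem time_varying_controller_geometric_decay_above_threshold
    (g : ℕ → ℝ → ℝ)
    (hg : ∀ n : ℕ, 1 ≤ n → Differentiable ℝ (g n))
    (hconv : ∀ n : ℕ, 1 ≤ n → ConvexOn ℝ Set.univ (g n))
    (c C : ℝ) (hc : 0 < c) (hcC : c ≤ C)
    (hbound : ∀ n : ℕ, 1 ≤ n → ∀ x : ℝ, c ≤ deriv (g n) x ∧ deriv (g n) x ≤ C)
    (r : ℝ) (u e : ℕ → ℝ)
    (he : ∀ n : ℕ, e (n + 1) = r - g (n + 1) (u n))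
    (hu : ∀ n : ℕ, u (n + 1) = u n + e (n + 1) / deriv (g (n + 1)) (u n))
    (δ : ℝ) (hδ : 0 < δ)
    (hvar : ∀ n : ℕ, 1 ≤ n → |g (n + 1) (u n) - g n (u n)| ≤ δ) :
    ∃ γ ∈ Set.Ioo (0 : ℝ) 1, ∃ η > (0 : ℝ), ∃ N : ℕ,
      ∀ n : ℕ, N ≤ n → η < |e n| → |e (n + 1)| ≤ γ * |e n| := by
  have hC : (0:ℝ) < C := lt_of_lt_of_le hc hcC
  refine ⟨1 - c / (2 * C), ⟨by
    have : c / (2 * C) ≤ 1 / 2 := by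
      rw [div_le_div_iff₀ (by linarith) (by norm_num)]; linarith
    linarith, by
    have : 0 < c / (2 * C) := by positivity
    linarith⟩, 2 * C * δ / c, by positivity, 2, ?_⟩
  intro n hn hη
  -- write n = k + 2
  obtain ⟨k, rfl⟩ : ∃ k, n = k + 2 := ⟨n - 2, by omega⟩
  -- key fact: after any Newton step with a convex plant, the (unperturbed) error is ≤ 0
  have post_step : ∀ m : ℕ, r ≤ g (m + 1) (u (m + 1)) := by
    intro m
    have hd := hbound (m + 1) (by omega) (u m)
    have hd0 : deriv (g (m + 1)) (u m) ≠ 0 := by linarith [hd.1]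
    have := tangent_le_aux (g (m + 1)) (hg (m + 1) (by omega))
      (hconv (m + 1) (by omega)) (u m) (u (m + 1))
    rw [hu m] at this ⊢
    have : g (m+1) (u m) + e (m+1) ≤ g (m+1) (u m + e (m+1) / deriv (g (m+1)) (u m)) := by
      have harith : deriv (g (m+1)) (u m) *
          (u m + e (m+1) / deriv (g (m+1)) (u m) - u m) = e (m+1) := by
        field_simp
        ring
      linarith [this, harith.le, harith.ge]
    have herr := he m
    linarith
  -- hence e (k+2) ≤ δ
  have he2 : e (k + 2) ≤ δ := by
    have h1 := post_step k
    have h2 := hvar (k + 1) (by omega)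
    rw [abs_le] at h2
    have := he (k + 1)
    linarith [h2.1, h2.2]
  have hηδ : δ < |e (k + 2)| := by
    have : δ ≤ 2 * C * δ / c := by
      rw [le_div_iff₀ hc]; nlinarith
    linarith
  -- so e (k+2) < 0
  have heneg : e (k + 2) < 0 := by
    rcases abs_cases (e (k + 2)) with ⟨h1, _⟩ | ⟨_, h2⟩
    · linarith [hηδ, he2, h1.le]
    · linarith
  have habs : |e (k + 2)| = -(e (k + 2)) := abs_of_neg heneg
  -- set up the Newton step at time k+2
  set x := u (k + 1) with hx
  set d := deriv (g (k + 2)) x with hdd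
  have hd := hbound (k + 2) (by omega) x
  have hdpos : 0 < d := lt_of_lt_of_le hc hd.1
  have hy : u (k + 2) = x + e (k + 2) / d := hu (k + 1)
  have hstep : u (k + 2) ≤ x := by
    rw [hy]
    have : e (k + 2) / d ≤ 0 := by
      rw [div_nonpos_iff]; right; exact ⟨heneg.le, hdpos.le⟩
    linarith
  -- tangent inequality: r ≤ g (k+2) (u (k+2))
  have hlow : r ≤ g (k + 2) (u (k + 2)) := post_step (k + 1)
  -- MVT lower bound: g (k+2) x - g (k+2) (u (k+2)) ≥ c * (x - u (k+2))
  have hmvt := mvt_lower_aux (g (k + 2)) (hg (k + 2) (by omega)) c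
    (fun z => (hbound (k + 2) (by omega) z).1) x (u (k + 2)) hstep
  have hxy : x - u (k + 2) = -(e (k + 2)) / d := by rw [hy]; ring
  have hkey : g (k + 2) (u (k + 2)) - r ≤ (1 - c / C) * (-(e (k + 2))) := by
    have h1 : c * (-(e (k + 2)) / d) ≤ g (k + 2) x - g (k + 2) (u (k + 2)) := by
      rw [← hxy]; exact hmvt
    have h2 : c / C * (-(e (k + 2))) ≤ c * (-(e (k + 2)) / d) := by
      have hdiv : -(e (k + 2)) / C ≤ -(e (k + 2)) / d :=
        div_le_div_of_nonneg_left (by linarith) hdpos hd.2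
      rw [div_mul_eq_mul_div, mul_div_assoc]
      exact mul_le_mul_of_nonneg_left hdiv hc.le
    have herr : e (k + 2) = r - g (k + 2) x := he (k + 1)
    have : g (k + 2) (u (k + 2)) - r ≤ -(e (k + 2)) - c / C * (-(e (k + 2))) := by
      linarith
    linarith [this]
  -- perturbation
  have hpert := hvar (k + 2) (by omega)
  rw [abs_le] at hpert
  have he3 : e (k + 3) = r - g (k + 3) (u (k + 2)) := he (k + 2)
  have hup : |e (k + 3)| ≤ (1 - c / C) * (-(e (k + 2))) + δ := by
    rw [abs_le]
    constructor
    · have : g (k + 3) (u (k + 2)) - r ≤ (1 - c / C) * (-(e (k + 2))) + δ := by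
        linarith [hpert.1, hkey]
      linarith [he3.le, he3.ge, this]
    · have : r - g (k + 3) (u (k + 2)) ≤ δ := by linarith [hpert.2, hlow]
      have hnn : 0 ≤ (1 - c / C) * (-(e (k + 2))) := by
        apply mul_nonneg
        · have : c / C ≤ 1 := div_le_one_of_le₀ hcC hC.le
          linarith
        · linarith
      linarith [he3.le, he3.ge]
  -- conclude
  have hδ' : δ ≤ c / (2 * C) * (-(e (k + 2))) := by
    rw [habs] at hη
    rw [div_mul_eq_mul_div, le_div_iff₀ (by linarith)]
    have : 2 * C * δ / c < -(e (k + 2)) := hη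
    rw [div_lt_iff₀ hc] at this
    nlinarith
  rw [habs]
  have : (1 - c / C) * (-(e (k + 2))) + δ ≤ (1 - c / (2 * C)) * (-(e (k + 2))) := by
    have : (1 - c / (2*C)) * (-(e (k+2))) - (1 - c / C) * (-(e (k+2)))
        = c / (2*C) * (-(e (k+2))) := by
      field_simp; ring
    linarith
  linarith [hup]
end
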